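/- Let M(s) = f0 + gᵀs + (1/2)sᵀHs + (β/6)‖s‖³ + (σ/4)‖s‖⁴ with σ ≥ 0, and let B(s) = H + (β/2)‖s‖ I + σ‖s‖² I. If a point s_c ∈ ℝⁿ satisfies B(s_c) s_c = -g, B(s_c) ⪰ 0, and β ≥ -3σ‖s_c‖, then s_c is a global minimizer of M over ℝⁿ. -/

import Mathlib

/-!
Write `a = ‖s_c‖`, `λ = (β/2) a + σ a²`, so that `B(s_c) = H + λ I`, and `d = s - s_c`.
Because `B(s_c) s_c = -g`, the quadratic `q(s) = gᵀs + ½ sᵀ B(s_c) s` satisfies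
`q(s) = q(s_c) + ½ dᵀ B(s_c) d` exactly; trading `B(s_c)` back for `H` leaves a radial remainder,
`M(s) - M(s_c) = ½ dᵀ B(s_c) d + φ(‖s‖)` with
`12 φ(x) = (β + 3σa)(x - a)²(2x + a) + 3σ x²(x - a)² ≥ 0`.
-/

open Matrix Polynomial

noncomputable def vecEnorm {n : ℕ} (s : Fin n → ℝ) : ℝ := Real.sqrt (s ⬝ᵥ s)

noncomputable def Mfun {n : ℕ} (f0 : ℝ) (g : Fin n → ℝ)
    (H : Matrix (Fin n) (Fin n) ℝ) (β σ : ℝ) (s : Fin n → ℝ) : ℝ :=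
  f0 + g ⬝ᵥ s + (1/2) * (s ⬝ᵥ (H *ᵥ s)) + (β/6) * vecEnorm s ^ 3 + (σ/4) * vecEnorm s ^ 4

noncomputable def Bmat {n : ℕ} (H : Matrix (Fin n) (Fin n) ℝ) (β σ : ℝ)
    (s : Fin n → ℝ) : Matrix (Fin n) (Fin n) ℝ :=
  H + ((β/2) * vecEnorm s) • (1 : Matrix (Fin n) (Fin n) ℝ)
    + (σ * vecEnorm s ^ 2) • (1 : Matrix (Fin n) (Fin n) ℝ)

lemma vecEnorm_nonneg {n : ℕ} (s : Fin n → ℝ) : 0 ≤ vecEnorm s :=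
  Real.sqrt_nonneg _

lemma vecEnorm_sq {n : ℕ} (s : Fin n → ℝ) : vecEnorm s ^ 2 = s ⬝ᵥ s :=
  Real.sq_sqrt (by simpa using dotProduct_self_star_nonneg s)

lemma Bmat_eq_add_smul_one {n : ℕ} (H : Matrix (Fin n) (Fin n) ℝ) (β σ : ℝ) (s : Fin n → ℝ) :
    Bmat H β σ s = H + (β / 2 * vecEnorm s + σ * vecEnorm s ^ 2) • 1 := by
  rw [Bmat, add_smul, add_assoc]

lemma dotProduct_add_smul_one_mulVec {ι R : Type*} [Fintype ι] [DecidableEq ι] [CommRing R]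
    (A : Matrix ι ι R) (c : R) (v : ι → R) :
    v ⬝ᵥ ((A + c • 1) *ᵥ v) = v ⬝ᵥ (A *ᵥ v) + c * (v ⬝ᵥ v) := by
  rw [add_mulVec, smul_mulVec, one_mulVec, dotProduct_add, dotProduct_smul, smul_eq_mul]

/-- Taylor expansion of a quadratic around a stationary point `c`, scaled by `2`. -/
lemma Matrix.IsSymm.two_mul_dotProduct_add_quadForm {ι R : Type*} [Fintype ι] [CommRing R]
    {A : Matrix ι ι R} (hA : A.IsSymm) {g c : ι → R} (hc : A *ᵥ c = -g) (s : ι → R) :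
    2 * (g ⬝ᵥ s) + s ⬝ᵥ (A *ᵥ s)
      = 2 * (g ⬝ᵥ c) + c ⬝ᵥ (A *ᵥ c) + (s - c) ⬝ᵥ (A *ᵥ (s - c)) := by
  have hsymm : s ⬝ᵥ (A *ᵥ c) = c ⬝ᵥ (A *ᵥ s) := by
    rw [dotProduct_mulVec, ← mulVec_transpose, hA.eq, dotProduct_comm]
  have hg : g = -(A *ᵥ c) := by rw [hc, neg_neg]
  simp only [hg, mulVec_sub, dotProduct_sub, sub_dotProduct, neg_dotProduct]
  rw [dotProduct_comm (A *ᵥ c) s, dotProduct_comm (A *ᵥ c) c, hsymm]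
  ring

lemma cubic_quartic_gap_nonneg {a x β σ : ℝ} (ha : 0 ≤ a) (hx : 0 ≤ x) (hσ : 0 ≤ σ)
    (hβ : -3 * σ * a ≤ β) :
    (β / 2 * a + σ * a ^ 2) * (x ^ 2 - a ^ 2) ≤ β / 3 * (x ^ 3 - a ^ 3) + σ / 2 * (x ^ 4 - a ^ 4) := by
  have hcubic : 0 ≤ (β + 3 * σ * a) * ((x - a) ^ 2 * (2 * x + a)) :=
    mul_nonneg (by linarith) (mul_nonneg (sq_nonneg _) (by linarith))
  have hquartic : 0 ≤ σ * (x * (x - a)) ^ 2 := mul_nonneg hσ (sq_nonneg _)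
  linear_combination (hcubic + 3 * hquartic) / 6

theorem stmt1_general {n : ℕ} (f0 : ℝ) (g : Fin n → ℝ) (H : Matrix (Fin n) (Fin n) ℝ)
    (β σ : ℝ) (hσ : 0 ≤ σ) (sc : Fin n → ℝ)
    (h1 : (Bmat H β σ sc) *ᵥ sc = -g)
    (h2 : (Bmat H β σ sc).PosSemidef)
    (h3 : β ≥ -3 * σ * vecEnorm sc) :
    ∀ s : Fin n → ℝ, Mfun f0 g H β σ sc ≤ Mfun f0 g H β σ s := by
  intro s
  have hB : ∀ v, v ⬝ᵥ (Bmat H β σ sc *ᵥ v)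
      = v ⬝ᵥ (H *ᵥ v) + (β / 2 * vecEnorm sc + σ * vecEnorm sc ^ 2) * vecEnorm v ^ 2 := by
    intro v
    rw [Bmat_eq_add_smul_one, dotProduct_add_smul_one_mulVec, ← vecEnorm_sq v]
  have hmodel := (isHermitian_iff_isSymm.mp h2.isHermitian).two_mul_dotProduct_add_quadForm h1 s
  have hcurv : 0 ≤ (s - sc) ⬝ᵥ (Bmat H β σ sc *ᵥ (s - sc)) := by
    simpa using h2.dotProduct_mulVec_nonneg (s - sc)
  have hgap := cubic_quartic_gap_nonneg (vecEnorm_nonneg sc) (vecEnorm_nonneg s) hσ h3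
  rw [hB, hB] at hmodel
  unfold Mfun
  linarith

theorem stmt1 {n : ℕ} (f0 : ℝ) (g : Fin n → ℝ) (H : Matrix (Fin n) (Fin n) ℝ)
    (hH : H.IsSymm) (β σ : ℝ) (hσ : 0 ≤ σ) (sc : Fin n → ℝ)
    (h1 : (Bmat H β σ sc) *ᵥ sc = -g)
    (h2 : (Bmat H β σ sc).PosSemidef)
    (h3 : β ≥ -3 * σ * vecEnorm sc) :
    ∀ s : Fin n → ℝ, Mfun f0 g H β σ sc ≤ Mfun f0 g H β σ s :=
  stmt1_general f0 g H β σ hσ sc h1 h2 h3
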